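/- The function R ↦ Σ_{n=1}^N log(x_nᵀ R⁻¹ x_n) is geodesically convex on the manifold of symmetric positive definite d×d matrices equipped with the affine-invariant geometry: for any positive definite R₀, R₁ and the geodesic R_t = R₀^{1/2}(R₀^{-1/2} R₁ R₀^{-1/2})^t R₀^{1/2}, the map t ↦ log(xᵀ R_t⁻¹ x) is convex on [0,1] for every nonzero x ∈ ℝ^d. -/

import Mathlib

/-!
Diagonalize `L = U diag(λ) Uᵀ`. Since `(S exp(tL) S)⁻¹ = S⁻¹ exp(-tL) S⁻¹`, the quadratic form
`xᵀ R_t⁻¹ x` equals `∑ᵢ zᵢ² exp(-λᵢ t)` with `z = Uᵀ S⁻¹ x`. The logarithm of a nonnegative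
combination of exponentials is convex: Hölder's inequality with exponents `1/a`, `1/b` gives
`g(a p + b q) ≤ g(p)^a g(q)^b`.
-/

open Matrix Set

theorem Real.sum_rpow_mul_rpow_le {ι : Type*} (s : Finset ι) {f g : ι → ℝ}
    (hf : ∀ i ∈ s, 0 ≤ f i) (hg : ∀ i ∈ s, 0 ≤ g i) {a b : ℝ} (ha : 0 < a) (hb : 0 < b)
    (hab : a + b = 1) :
    ∑ i ∈ s, f i ^ a * g i ^ b ≤ (∑ i ∈ s, f i) ^ a * (∑ i ∈ s, g i) ^ b := by
  have hconj : (1 / a).HolderConjugate (1 / b) :=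
    Real.holderConjugate_iff.2 ⟨by rw [lt_div_iff₀ ha]; linarith, by simpa only [one_div, inv_inv]⟩
  have rpow_rpow_inv : ∀ {e : ℝ} {s : Finset ι} {h : ι → ℝ}, e ≠ 0 → (∀ i ∈ s, 0 ≤ h i) →
      ∑ i ∈ s, (h i ^ e) ^ (1 / e) = ∑ i ∈ s, h i := fun he hh =>
    Finset.sum_congr rfl fun i hi => by rw [← Real.rpow_mul (hh i hi), mul_one_div_cancel he,
      Real.rpow_one]
  simpa only [rpow_rpow_inv ha.ne' hf, rpow_rpow_inv hb.ne' hg, one_div_one_div] using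
    Real.inner_le_Lp_mul_Lq_of_nonneg s hconj (fun i hi => Real.rpow_nonneg (hf i hi) a)
      (fun i hi => Real.rpow_nonneg (hg i hi) b)

theorem convexOn_log_sum_mul_exp {ι : Type*} [Fintype ι] (c μ : ι → ℝ) (hc : ∀ i, 0 ≤ c i) :
    ConvexOn ℝ univ (fun t => Real.log (∑ i, c i * Real.exp (μ i * t))) := by
  by_cases hzero : ∀ i, c i = 0
  -- junk value: the function is then `log 0 = 0`
  · simpa only [hzero, zero_mul, Finset.sum_const_zero, Real.log_zero] using
      convexOn_const (0 : ℝ) convex_univ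
  obtain ⟨j, hj⟩ := not_forall.1 hzero
  set g : ℝ → ℝ := fun t => ∑ i, c i * Real.exp (μ i * t)
  have hterm : ∀ t i, 0 ≤ c i * Real.exp (μ i * t) := fun t i =>
    mul_nonneg (hc i) (Real.exp_pos _).le
  have hg : ∀ t, 0 < g t := fun t =>
    (mul_pos ((hc j).lt_of_ne' hj) (Real.exp_pos _)).trans_le
      (Finset.single_le_sum (fun i _ => hterm t i) (Finset.mem_univ j))
  refine convexOn_iff_forall_pos.2 ⟨convex_univ, fun p _ q _ a b ha hb hab => ?_⟩
  have hsplit : ∀ i, c i * Real.exp (μ i * (a * p + b * q))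
      = (c i * Real.exp (μ i * p)) ^ a * (c i * Real.exp (μ i * q)) ^ b := fun i => by
    rw [Real.mul_rpow (hc i) (Real.exp_pos _).le, Real.mul_rpow (hc i) (Real.exp_pos _).le,
      ← Real.exp_mul, ← Real.exp_mul, mul_mul_mul_comm, ← Real.rpow_add' (hc i) (by simp [hab]),
      hab, Real.rpow_one, ← Real.exp_add]
    ring_nf
  have hholder : g (a * p + b * q) ≤ g p ^ a * g q ^ b := by
    simpa only [g, hsplit] using Real.sum_rpow_mul_rpow_le Finset.univ
      (fun i _ => hterm p i) (fun i _ => hterm q i) ha hb hab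
  calc Real.log (g (a * p + b * q)) ≤ Real.log (g p ^ a * g q ^ b) :=
        Real.log_le_log (hg _) hholder
    _ = a * Real.log (g p) + b * Real.log (g q) := by
        rw [Real.log_mul (Real.rpow_pos_of_pos (hg p) a).ne' (Real.rpow_pos_of_pos (hg q) b).ne',
          Real.log_rpow (hg p), Real.log_rpow (hg q)]

theorem Matrix.dotProduct_transpose_mul_mul_mulVec {m n R : Type*} [Fintype m] [Fintype n]
    [CommSemiring R] (A : Matrix m n R) (M : Matrix m m R) (x : n → R) :
    x ⬝ᵥ (Aᵀ * M * A) *ᵥ x = (A *ᵥ x) ⬝ᵥ M *ᵥ (A *ᵥ x) := by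
  rw [← mulVec_mulVec, ← mulVec_mulVec, dotProduct_mulVec, vecMul_transpose]

theorem Matrix.dotProduct_diagonal_mulVec_self {n R : Type*} [Fintype n] [DecidableEq n]
    [CommSemiring R] (d x : n → R) : x ⬝ᵥ diagonal d *ᵥ x = ∑ i, x i ^ 2 * d i := by
  simp only [dotProduct, mulVec_diagonal]
  exact Finset.sum_congr rfl fun i _ => by ring

namespace Matrix.IsHermitian

variable {n : Type*} [Fintype n] [DecidableEq n] {L : Matrix n n ℝ}

theorem exp_smul_eq (hL : L.IsHermitian) (t : ℝ) :
    NormedSpace.exp (t • L) =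
      (hL.eigenvectorUnitary : Matrix n n ℝ) * diagonal (fun i => Real.exp (t * hL.eigenvalues i)) *
        (hL.eigenvectorUnitary : Matrix n n ℝ)ᵀ := by
  set U : Matrix n n ℝ := (hL.eigenvectorUnitary : Matrix n n ℝ)
  have hUU : Uᵀ * U = 1 := by
    simpa [U, star_eq_conjTranspose] using Unitary.coe_star_mul_self hL.eigenvectorUnitary
  have hUinv : U⁻¹ = Uᵀ := inv_eq_left_inv hUU
  have hUunit : IsUnit U := (isUnit_iff_isUnit_det U).2 (isUnit_det_of_left_inverse hUU)
  have hL' : t • L = U * diagonal (fun i => t * hL.eigenvalues i) * U⁻¹ := by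
    conv_lhs => rw [hL.spectral_theorem]
    simp only [U, hUinv, Unitary.conjStarAlgAut_apply, star_eq_conjTranspose,
      conjTranspose_eq_transpose_of_trivial]
    rw [← smul_mul_assoc, ← mul_smul_comm, ← diagonal_smul]
    rfl
  rw [hL', exp_conj _ _ hUunit, exp_diagonal, hUinv]
  congr
  ext i
  simp [Real.exp_eq_exp_ℝ]

theorem dotProduct_exp_smul_mulVec (hL : L.IsHermitian) (t : ℝ) (x : n → ℝ) :
    x ⬝ᵥ NormedSpace.exp (t • L) *ᵥ x =
      ∑ i, ((hL.eigenvectorUnitary : Matrix n n ℝ)ᵀ *ᵥ x) i ^ 2 *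
        Real.exp (hL.eigenvalues i * t) := by
  set U : Matrix n n ℝ := (hL.eigenvectorUnitary : Matrix n n ℝ)
  have h := dotProduct_transpose_mul_mul_mulVec Uᵀ
    (diagonal fun i => Real.exp (t * hL.eigenvalues i)) x
  rw [transpose_transpose] at h
  rw [hL.exp_smul_eq, h, dotProduct_diagonal_mulVec_self]
  simp only [mul_comm t]

end Matrix.IsHermitian

theorem stmt_5_general (d : ℕ)
    (S : Matrix (Fin d) (Fin d) ℝ) (hS : S.PosDef)
    (L : Matrix (Fin d) (Fin d) ℝ) (hL : L.IsHermitian)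
    (x : Fin d → ℝ) :
    ConvexOn ℝ (Icc (0 : ℝ) 1)
      (fun t : ℝ => Real.log (x ⬝ᵥ (S * NormedSpace.exp (t • L) * S)⁻¹.mulVec x)) := by
  have hSinv : S⁻¹ᵀ = S⁻¹ := by
    rw [transpose_nonsing_inv, ← conjTranspose_eq_transpose_of_trivial, hS.isHermitian.eq]
  have hquad : ∀ t : ℝ, x ⬝ᵥ (S * NormedSpace.exp (t • L) * S)⁻¹ *ᵥ x =
      ∑ i, ((hL.eigenvectorUnitary : Matrix (Fin d) (Fin d) ℝ)ᵀ *ᵥ (S⁻¹ *ᵥ x)) i ^ 2 *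
        Real.exp (-hL.eigenvalues i * t) := fun t => by
    rw [Matrix.mul_inv_rev, Matrix.mul_inv_rev, ← exp_neg, ← neg_smul, ← mul_assoc]
    nth_rewrite 1 [← hSinv]
    rw [dotProduct_transpose_mul_mul_mulVec, hL.dotProduct_exp_smul_mulVec]
    simp only [mul_neg, neg_mul]
  simp only [hquad]
  exact (convexOn_log_sum_mul_exp _ _ fun i => sq_nonneg _).subset (subset_univ _)
    (convex_Icc 0 1)

/-- Geodesic convexity: along the affine-invariant geodesic
`R_t = R₀^{1/2} (R₀^{-1/2} R₁ R₀^{-1/2})^t R₀^{1/2}` (with `S = R₀^{1/2}` and the matrix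
power realized as `exp (t L)` for a Hermitian logarithm `L` of `S⁻¹ R₁ S⁻¹`),
the map `t ↦ log (xᵀ R_t⁻¹ x)` is convex on `[0,1]` for every nonzero `x`. -/
theorem stmt_5 (d : ℕ) (hd : 1 ≤ d)
    (R0 R1 : Matrix (Fin d) (Fin d) ℝ) (h0 : R0.PosDef) (h1 : R1.PosDef)
    (S : Matrix (Fin d) (Fin d) ℝ) (hS : S.PosDef) (hSsq : S * S = R0)
    (L : Matrix (Fin d) (Fin d) ℝ) (hL : L.IsHermitian)
    (hexp : NormedSpace.exp L = S⁻¹ * R1 * S⁻¹)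
    (x : Fin d → ℝ) (hx : x ≠ 0) :
    ConvexOn ℝ (Icc (0 : ℝ) 1)
      (fun t : ℝ => Real.log (x ⬝ᵥ (S * NormedSpace.exp (t • L) * S)⁻¹.mulVec x)) :=
  stmt_5_general d S hS L hL x
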